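/- Let V be a g-dimensional vector space of sections written as a direct sum V = H⁰(ω_X(nP)) ⊕ H⁰(ω_X((n+2)P − gQ)) where the second summand is 1-dimensional and h⁰(ω_X(nP − gQ)) = 0. Then for each 0 ≤ i ≤ g, dim V(−iQ) = h⁰(ω_X(nP − iQ)) + 1, where V(−iQ) denotes the subspace of sections vanishing to order ≥ i at Q. -/
import Mathlib

/-- Let `V = W 0 ⊕ L` (a direct sum inside the space of sections `E`), where
`L = H⁰(ω_X((n+2)P - gQ))` is 1-dimensional, `W i = H⁰(ω_X(nP - iQ)) = W 0 ⊓ H i`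
with `H i = H⁰(ω_X((n+2)P - iQ))` the subspace of sections vanishing to order ≥ i at Q,
and `L ≤ H i` for `i ≤ g`. Then `dim V(−iQ) = dim (W i) + 1` for all `0 ≤ i ≤ g`,
where `V(−iQ) = V ⊓ H i`. -/
theorem stmt_4 {E : Type*} [AddCommGroup E] [Module ℂ E] [FiniteDimensional ℂ E]
    (g : ℕ) (H W : ℕ → Submodule ℂ E) (L : Submodule ℂ E)
    (hL : Module.finrank ℂ L = 1)
    (hW : ∀ i, W i = W 0 ⊓ H i)
    (hLH : ∀ i ≤ g, L ≤ H i)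
    (hWg : W g = ⊥)
    (hdisj : W 0 ⊓ L = ⊥) :
    ∀ i ≤ g, Module.finrank ℂ ↥((W 0 ⊔ L) ⊓ H i) = Module.finrank ℂ ↥(W i) + 1 := by
  intro i hi
  have key : (W 0 ⊔ L) ⊓ H i = W i ⊔ L := by
    rw [sup_comm, sup_inf_assoc_of_le (W 0) (hLH i hi), hW i, sup_comm, inf_comm]
  have hdisj' : W i ⊓ L = ⊥ := by
    refine le_antisymm ?_ bot_le
    rw [← hdisj]
    exact inf_le_inf_right L (by rw [hW i]; exact inf_le_left)
  have := Submodule.finrank_sup_add_finrank_inf_eq (W i) L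
  rw [key]
  rw [hdisj', hL] at this
  simpa using this
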